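/- Soundness of the labeled natural deduction system N(LTL∇): for every set Φ of labeled and relational formulas and every labeled formula α:A, if α:A is derivable in N(LTL∇) from open assumptions all contained in Φ (written Φ ⊢∇ α:A), then Φ ⊨∇ α:A, i.e., for every LTL-model M and every interpretation I of labels into ℕ, if M,I satisfies every formula in Φ then M,I satisfies α:A. -/
import Mathlib


/-! ## LTL∇-formulas: `A ::= p | ⊥ | A ⊃ A | G A | X A | ∇ A` -/
inductive NablaFormula (P : Type) : Type
  | atom  : P → NablaFormula P
  | bot   : NablaFormula P
  | imp   : NablaFormula P → NablaFormula P → NablaFormula P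
  | G     : NablaFormula P → NablaFormula P
  | X     : NablaFormula P → NablaFormula P
  | nabla : NablaFormula P → NablaFormula P

namespace NablaFormula
variable {P : Type}
/-- `¬A ≡ A ⊃ ⊥` -/
def neg (A : NablaFormula P) : NablaFormula P := imp A bot
/-- `A ∨ B ≡ ¬A ⊃ B` -/
def or (A B : NablaFormula P) : NablaFormula P := imp (neg A) B
/-- `A ∧ B ≡ ¬(¬A ∨ ¬B)` -/
def and (A B : NablaFormula P) : NablaFormula P := neg (or (neg A) (neg B))
/-- `F A ≡ ¬G¬A` -/
def F (A : NablaFormula P) : NablaFormula P := neg (G (neg A))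
end NablaFormula

/-- Truth of an LTL∇-formula at an observation sequence, in the LTL-model given by
the valuation `V : ℕ → P → Prop` (the time structure is the standard structure of ℕ).
A nonempty observation sequence `[n_0, …, n_k]` is represented *in reverse* by its
last element `n = n_k` together with the reversed remainder `ρ = [n_{k-1}, …, n_0]`;
thus `NablaSat V A n ρ` means `M, [n_0, …, n_{k-1}, n] ⊨∇ A`. -/
def NablaSat {P : Type} (V : ℕ → P → Prop) : NablaFormula P → ℕ → List ℕ → Prop
  | .atom p, n, _ => V n p
  | .bot, _, _ => False
  | .imp A B, n, ρ => NablaSat V A n ρ → NablaSat V B n ρ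
  | .G A, n, ρ => ∀ m, n ≤ m → NablaSat V A m (n :: ρ)
  | .X A, n, ρ => NablaSat V A (n + 1) (n :: ρ)
  | .nabla A, n, [] => NablaSat V A n []
  | .nabla A, n, n' :: ρ => ∀ m, n' ≤ m → m ≤ n → NablaSat V A m (n' :: ρ)

/-! ## LTL-formulas: `A ::= p | ⊥ | A ⊃ A | G A | X A | A U B` -/
inductive LTLFormula (P : Type) : Type
  | atom : P → LTLFormula P
  | bot  : LTLFormula P
  | imp  : LTLFormula P → LTLFormula P → LTLFormula P
  | G    : LTLFormula P → LTLFormula P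
  | X    : LTLFormula P → LTLFormula P
  | U    : LTLFormula P → LTLFormula P → LTLFormula P

namespace LTLFormula
variable {P : Type}
def neg (A : LTLFormula P) : LTLFormula P := imp A bot
def or (A B : LTLFormula P) : LTLFormula P := imp (neg A) B
def and (A B : LTLFormula P) : LTLFormula P := neg (or (neg A) (neg B))
def F (A : LTLFormula P) : LTLFormula P := neg (G (neg A))
def iff (A B : LTLFormula P) : LTLFormula P := and (imp A B) (imp B A)
end LTLFormula

/-- Standard LTL truth at a time instant `n` in the model with valuation `V`. -/
def LTLSat {P : Type} (V : ℕ → P → Prop) : LTLFormula P → ℕ → Prop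
  | .atom p, n => V n p
  | .bot, _ => False
  | .imp A B, n => LTLSat V A n → LTLSat V B n
  | .G A, n => ∀ m, n ≤ m → LTLSat V A m
  | .X A, n => LTLSat V A (n + 1)
  | .U A B, n => ∃ n', n ≤ n' ∧ LTLSat V B n' ∧ ∀ m, n ≤ m → m < n' → LTLSat V A m

/-- The translation `(·)*` from LTL into LTL∇:
`(A U B)* = B* ∨ (F (X B* ∧ ∇ A*))`. -/
def trNabla {P : Type} : LTLFormula P → NablaFormula P
  | .atom p => .atom p
  | .bot => .bot
  | .imp A B => .imp (trNabla A) (trNabla B)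
  | .G A => .G (trNabla A)
  | .X A => .X (trNabla A)
  | .U A B => NablaFormula.or (trNabla B)
      (NablaFormula.F (NablaFormula.and (.X (trNabla B)) (.nabla (trNabla A))))

/-! ## LTL^l- and LTL^{l∇}-formulas (mutual grammar) -/
mutual
  /-- LTL^l-formulas: `A^l ::= p | ⊥ | A^l ⊃ A^l | G A^∇ | X A^∇`. -/
  inductive IsLocal {P : Type} : NablaFormula P → Prop
    | atom (p : P) : IsLocal (.atom p)
    | bot : IsLocal .bot
    | imp {A B : NablaFormula P} : IsLocal A → IsLocal B → IsLocal (.imp A B)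
    | G {A : NablaFormula P} : IsHist A → IsLocal (.G A)
    | X {A : NablaFormula P} : IsHist A → IsLocal (.X A)
  /-- LTL^{l∇}-formulas: `A^∇ ::= A^l | A^∇ ⊃ A^∇ | ∇ A^∇`. -/
  inductive IsHist {P : Type} : NablaFormula P → Prop
    | ofLocal {A : NablaFormula P} : IsLocal A → IsHist A
    | imp {A B : NablaFormula P} : IsHist A → IsHist B → IsHist (.imp A B)
    | nabla {A : NablaFormula P} : IsHist A → IsHist (.nabla A)
end

/-! ## The labeled natural deduction system N(LTL∇).
Labels are natural numbers (a denumerable set). A labeled formula `α : A` with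
`α = b_0 … b_{k-1} b` is represented in reverse, as the last label `b` together
with the reversed prefix `ρ = [b_{k-1}, …, b_0]`. -/

/-- Generic (labeled or relational) formulas. -/
inductive GenForm (P : Type) : Type
  | lab : ℕ → List ℕ → NablaFormula P → GenForm P  -- `lab b ρ A` is `(ρ.reverse)b : A`
  | le  : ℕ → ℕ → GenForm P                         -- `b ⩽ c`
  | lt  : ℕ → ℕ → GenForm P                         -- `b ◁ c` (immediate successor)

/-- The labels occurring in a generic formula. -/
def GenForm.labels {P : Type} : GenForm P → Set ℕ
  | .lab b ρ _ => insert b {x | x ∈ ρ}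
  | .le b c => {b, c}
  | .lt b c => {b, c}

/-- `x` does not occur in any formula of `Φ`. -/
def FreshIn {P : Type} (x : ℕ) (Φ : Set (GenForm P)) : Prop :=
  ∀ ψ ∈ Φ, x ∉ ψ.labels

/-- Substitution `φ[c/b]` of the label `c` for the label `b`: `φ.subst b c`. -/
def GenForm.subst {P : Type} : GenForm P → ℕ → ℕ → GenForm P
  | .lab d ρ A, b, c => .lab (if d = b then c else d) (ρ.map fun x => if x = b then c else x) A
  | .le d e, b, c => .le (if d = b then c else d) (if e = b then c else e)
  | .lt d e, b, c => .lt (if d = b then c else d) (if e = b then c else e)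

/-- Derivability in N(LTL∇): `Deriv Φ φ` means that there is a derivation of `φ`
whose open assumptions are all contained in `Φ`. -/
inductive Deriv {P : Type} : Set (GenForm P) → GenForm P → Prop
  | assume {Φ : Set (GenForm P)} {φ} : φ ∈ Φ → Deriv Φ φ
  | botE {Φ : Set (GenForm P)} {b₁ b₂ ρ₁ ρ₂ A} :
      Deriv (insert (.lab b₁ ρ₁ (A.imp .bot)) Φ) (.lab b₂ ρ₂ .bot) →
      Deriv Φ (.lab b₁ ρ₁ A)
  | impI {Φ : Set (GenForm P)} {b ρ A B} :
      Deriv (insert (.lab b ρ A) Φ) (.lab b ρ B) →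
      Deriv Φ (.lab b ρ (A.imp B))
  | impE {Φ : Set (GenForm P)} {b ρ A B} :
      Deriv Φ (.lab b ρ (A.imp B)) → Deriv Φ (.lab b ρ A) → Deriv Φ (.lab b ρ B)
  | GI {Φ : Set (GenForm P)} {b₁ b₂ ρ A} :
      Deriv (insert (.le b₁ b₂) Φ) (.lab b₂ (b₁ :: ρ) A) →
      b₂ ≠ b₁ → b₂ ∉ ρ → FreshIn b₂ Φ →
      Deriv Φ (.lab b₁ ρ (.G A))
  | GE {Φ : Set (GenForm P)} {b₁ b₂ ρ A} :
      Deriv Φ (.lab b₁ ρ (.G A)) → Deriv Φ (.le b₁ b₂) →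
      Deriv Φ (.lab b₂ (b₁ :: ρ) A)
  | XI {Φ : Set (GenForm P)} {b₁ b₂ ρ A} :
      Deriv (insert (.lt b₁ b₂) Φ) (.lab b₂ (b₁ :: ρ) A) →
      b₂ ≠ b₁ → b₂ ∉ ρ → FreshIn b₂ Φ →
      Deriv Φ (.lab b₁ ρ (.X A))
  | XE {Φ : Set (GenForm P)} {b₁ b₂ ρ A} :
      Deriv Φ (.lab b₁ ρ (.X A)) → Deriv Φ (.lt b₁ b₂) →
      Deriv Φ (.lab b₂ (b₁ :: ρ) A)
  | nablaI {Φ : Set (GenForm P)} {b₁ b₂ b₃ ρ A} :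
      Deriv (insert (.le b₁ b₂) (insert (.le b₂ b₃) Φ)) (.lab b₂ (b₁ :: ρ) A) →
      b₂ ≠ b₁ → b₂ ≠ b₃ → b₂ ∉ ρ → FreshIn b₂ Φ →
      Deriv Φ (.lab b₃ (b₁ :: ρ) (.nabla A))
  | nablaE {Φ : Set (GenForm P)} {b₁ b₂ b₃ ρ A} :
      Deriv Φ (.lab b₃ (b₁ :: ρ) (.nabla A)) →
      Deriv Φ (.le b₁ b₂) → Deriv Φ (.le b₂ b₃) →
      Deriv Φ (.lab b₂ (b₁ :: ρ) A)
  | last {Φ : Set (GenForm P)} {b ρ ρ' A} :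
      Deriv Φ (.lab b ρ' A) → IsLocal A →
      Deriv Φ (.lab b ρ A)
  | serLt {Φ : Set (GenForm P)} {b₁ b₂ b ρ A} :
      Deriv (insert (.lt b₁ b₂) Φ) (.lab b ρ A) →
      b₂ ≠ b₁ → b₂ ≠ b → b₂ ∉ ρ → FreshIn b₂ Φ →
      Deriv Φ (.lab b ρ A)
  | linLt {Φ : Set (GenForm P)} {b₁ b₂ b₃ φ b ρ A} :
      Deriv Φ (.lt b₁ b₂) → Deriv Φ (.lt b₁ b₃) → Deriv Φ φ →
      Deriv (insert (φ.subst b₂ b₃) Φ) (.lab b ρ A) →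
      Deriv Φ (.lab b ρ A)
  | reflLe {Φ : Set (GenForm P)} {b₁ b ρ A} :
      Deriv (insert (.le b₁ b₁) Φ) (.lab b ρ A) →
      Deriv Φ (.lab b ρ A)
  | transLe {Φ : Set (GenForm P)} {b₁ b₂ b₃ b ρ A} :
      Deriv Φ (.le b₁ b₂) → Deriv Φ (.le b₂ b₃) →
      Deriv (insert (.le b₁ b₃) Φ) (.lab b ρ A) →
      Deriv Φ (.lab b ρ A)
  | eqLe {Φ : Set (GenForm P)} {b₁ b₂ ρ A} :
      Deriv Φ (.le b₁ b₂) → Deriv Φ (.le b₂ b₁) →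
      Deriv Φ (.lab b₁ ρ A) →
      Deriv Φ (.lab b₂ ρ A)
  | splitLe {Φ : Set (GenForm P)} {b₁ b₂ b' φ b ρ A} :
      Deriv Φ (.le b₁ b₂) → Deriv Φ φ →
      Deriv (insert (φ.subst b₁ b₂) Φ) (.lab b ρ A) →
      Deriv (insert (.lt b₁ b') (insert (.le b' b₂) Φ)) (.lab b ρ A) →
      b' ≠ b₁ → b' ≠ b₂ → b' ≠ b → b' ∉ ρ → FreshIn b' Φ →
      Deriv Φ (.lab b ρ A)
  | baseLe {Φ : Set (GenForm P)} {b₁ b₂ b ρ A} :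
      Deriv Φ (.lt b₁ b₂) →
      Deriv (insert (.le b₁ b₂) Φ) (.lab b ρ A) →
      Deriv Φ (.lab b ρ A)
  | ind {Φ : Set (GenForm P)} {b₀ b bi bj ρ A} :
      Deriv Φ (.lab b₀ ρ A) → Deriv Φ (.le b₀ b) →
      Deriv (insert (.le b₀ bi) (insert (.lt bi bj) (insert (.lab bi ρ A) Φ)))
        (.lab bj ρ A) →
      bi ≠ bj → bi ≠ b → bi ≠ b₀ → bi ∉ ρ → FreshIn bi Φ →
      bj ≠ b → bj ≠ b₀ → bj ∉ ρ → FreshIn bj Φ →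
      Deriv Φ (.lab b ρ A)

/-- Satisfaction of generic formulas in a structure `⟨M, I⟩`, where `M` is given
by the valuation `V` and `I : L → ℕ` interprets labels. -/
def GSat {P : Type} (V : ℕ → P → Prop) (I : ℕ → ℕ) : GenForm P → Prop
  | .lab b ρ A => NablaSat V A (I b) (ρ.map I)
  | .le b c => I b ≤ I c
  | .lt b c => I c = I b + 1

/-! ## The Hilbert system H(LTL) -/

/-- Propositional evaluation of an LTL-formula with respect to a valuation `v` on
formulas, treating atoms and formulas with outermost `G`, `X`, `U` as propositional
atoms. `A` is an instance of a propositional tautology iff `propEval v A` for all `v`. -/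
def propEval {P : Type} (v : LTLFormula P → Prop) : LTLFormula P → Prop
  | .atom p => v (.atom p)
  | .bot => False
  | .imp A B => propEval v A → propEval v B
  | .G A => v (.G A)
  | .X A => v (.X A)
  | .U A B => v (.U A B)

/-- Theorems of the Hilbert axiomatization H(LTL). -/
inductive HLTL {P : Type} : LTLFormula P → Prop
  | taut {A : LTLFormula P} : (∀ v : LTLFormula P → Prop, propEval v A) → HLTL A
  | a2 {A B : LTLFormula P} : HLTL (.imp (.G (.imp A B)) (.imp (.G A) (.G B)))
  | a3 {A : LTLFormula P} : HLTL (LTLFormula.iff (.X A.neg) (LTLFormula.X A).neg)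
  | a4 {A B : LTLFormula P} : HLTL (.imp (.X (.imp A B)) (.imp (.X A) (.X B)))
  | a5 {A : LTLFormula P} : HLTL (.imp (.G A) (LTLFormula.and A (.X (.G A))))
  | a6 {A : LTLFormula P} : HLTL (.imp (.G (.imp A (.X A))) (.imp A (.G A)))
  | a7 {A B : LTLFormula P} :
      HLTL (LTLFormula.iff (.U A B) (LTLFormula.or B (LTLFormula.and A (.X (.U A B)))))
  | a8 {A B : LTLFormula P} : HLTL (.imp (.U A B) (LTLFormula.F B))
  | mp {A B : LTLFormula P} : HLTL (.imp A B) → HLTL A → HLTL B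
  | necX {A : LTLFormula P} : HLTL A → HLTL (.X A)
  | necG {A : LTLFormula P} : HLTL A → HLTL (.G A)

/-! ### Auxiliary lemmas for soundness -/

private lemma map_update_of_not_mem {I : ℕ → ℕ} {x : ℕ} (n : ℕ) {ρ : List ℕ} (hx : x ∉ ρ) :
    ρ.map (Function.update I x n) = ρ.map I :=
  List.map_congr_left fun a ha =>
    Function.update_of_ne (by rintro rfl; exact hx ha) _ _

private lemma gsat_update {P : Type} {V : ℕ → P → Prop} {I : ℕ → ℕ} {x : ℕ} (n : ℕ)
    {ψ : GenForm P} (hx : x ∉ ψ.labels) :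
    GSat V (Function.update I x n) ψ ↔ GSat V I ψ := by
  cases ψ with
  | lab b ρ A =>
      simp only [GenForm.labels, Set.mem_insert_iff, Set.mem_setOf_eq, not_or] at hx
      rw [GSat, GSat, Function.update_of_ne (by rintro rfl; exact hx.1 rfl),
        map_update_of_not_mem n hx.2]
  | le b c =>
      simp only [GenForm.labels, Set.mem_insert_iff, Set.mem_singleton_iff, not_or] at hx
      rw [GSat, GSat, Function.update_of_ne (Ne.symm hx.1), Function.update_of_ne (Ne.symm hx.2)]
  | lt b c =>
      simp only [GenForm.labels, Set.mem_insert_iff, Set.mem_singleton_iff, not_or] at hx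
      rw [GSat, GSat, Function.update_of_ne (Ne.symm hx.1), Function.update_of_ne (Ne.symm hx.2)]

private lemma gsat_subst {P : Type} {V : ℕ → P → Prop} {I : ℕ → ℕ} {b c : ℕ}
    (φ : GenForm P) :
    GSat V I (φ.subst b c) ↔ GSat V (Function.update I b (I c)) φ := by
  have h1 : ∀ d, I (if d = b then c else d) = Function.update I b (I c) d := by
    intro d
    by_cases h : d = b
    · rw [if_pos h, h, Function.update_self]
    · rw [if_neg h, Function.update_of_ne h]
  cases φ with
  | lab d ρ A =>
      rw [GenForm.subst, GSat, GSat, List.map_map, h1 d]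
      have h2 : (I ∘ fun x => if x = b then c else x) = Function.update I b (I c) :=
        funext h1
      rw [h2]
  | le d e => rw [GenForm.subst, GSat, GSat, h1 d, h1 e]
  | lt d e => rw [GenForm.subst, GSat, GSat, h1 d, h1 e]

/-- Truth of a local formula does not depend on the history; truth of a hist
formula depends only on the last element of the history. -/
private lemma local_hist {P : Type} (A : NablaFormula P) :
    (IsLocal A → ∀ (V : ℕ → P → Prop) (n : ℕ) (ρ ρ' : List ℕ),
      NablaSat V A n ρ → NablaSat V A n ρ') ∧
    (IsHist A → ∀ (V : ℕ → P → Prop) (n h : ℕ) (ρ ρ' : List ℕ),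
      NablaSat V A n (h :: ρ) → NablaSat V A n (h :: ρ')) := by
  induction A with
  | atom p => exact ⟨fun _ _ _ _ _ h => h, fun _ _ _ _ _ _ h => h⟩
  | bot => exact ⟨fun _ _ _ _ _ h => h, fun _ _ _ _ _ _ h => h⟩
  | imp A B ihA ihB =>
      constructor
      · intro hL V n ρ ρ' hs ha
        cases hL with
        | imp hA hB => exact ihB.1 hB V n ρ ρ' (hs (ihA.1 hA V n ρ' ρ ha))
      · intro hH V n h ρ ρ' hs ha
        cases hH with
        | ofLocal hl =>
            cases hl with
            | imp hA hB =>
                exact ihB.1 hB V n (h :: ρ) (h :: ρ') (hs (ihA.1 hA V n (h :: ρ') (h :: ρ) ha))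
        | imp hA hB => exact ihB.2 hB V n h ρ ρ' (hs (ihA.2 hA V n h ρ' ρ ha))
  | G A ihA =>
      have loc : IsLocal (.G A) → ∀ (V : ℕ → P → Prop) (n : ℕ) (ρ ρ' : List ℕ),
          NablaSat V (.G A) n ρ → NablaSat V (.G A) n ρ' := by
        intro hL V n ρ ρ' hs m hm
        cases hL with
        | G hA => exact ihA.2 hA V m n ρ ρ' (hs m hm)
      refine ⟨loc, fun hH => ?_⟩
      cases hH with
      | ofLocal hl => exact fun V n h ρ ρ' => loc hl V n (h :: ρ) (h :: ρ')
  | X A ihA =>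
      have loc : IsLocal (.X A) → ∀ (V : ℕ → P → Prop) (n : ℕ) (ρ ρ' : List ℕ),
          NablaSat V (.X A) n ρ → NablaSat V (.X A) n ρ' := by
        intro hL V n ρ ρ' hs
        cases hL with
        | X hA => exact ihA.2 hA V (n + 1) n ρ ρ' hs
      refine ⟨loc, fun hH => ?_⟩
      cases hH with
      | ofLocal hl => exact fun V n h ρ ρ' => loc hl V n (h :: ρ) (h :: ρ')
  | nabla A ihA =>
      constructor
      · intro hL; cases hL
      · intro hH V n h ρ ρ' hs
        cases hH with
        | ofLocal hl => cases hl
        | nabla hA =>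
            intro m h1 h2
            exact ihA.2 hA V m h ρ ρ' (hs m h1 h2)

/-- Soundness for arbitrary generic formulas, by induction on the derivation. -/
private lemma sound_gen {P : Type} {Φ : Set (GenForm P)} {φ : GenForm P}
    (h : Deriv Φ φ) :
    ∀ (V : ℕ → P → Prop) (I : ℕ → ℕ), (∀ ψ ∈ Φ, GSat V I ψ) → GSat V I φ := by
  induction h with
  | assume hmem => exact fun V I hΦ => hΦ _ hmem
  | botE _ ih =>
      intro V I hΦ
      by_contra hc
      refine ih V I ?_
      rintro ψ (rfl | hψ)
      · exact hc
      · exact hΦ ψ hψ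
  | impI _ ih =>
      intro V I hΦ ha
      refine ih V I ?_
      rintro ψ (rfl | hψ)
      · exact ha
      · exact hΦ ψ hψ
  | impE _ _ ih1 ih2 => exact fun V I hΦ => ih1 V I hΦ (ih2 V I hΦ)
  | @GI Φ b₁ b₂ ρ A _ hne hnρ hfr ih =>
      intro V I hΦ m hm
      set I' := Function.update I b₂ m with hI'
      have hΦ' : ∀ ψ ∈ Φ, GSat V I' ψ := fun ψ hψ => (gsat_update m (hfr ψ hψ)).mpr (hΦ ψ hψ)
      have hins : ∀ ψ ∈ insert (GenForm.le b₁ b₂) Φ, GSat V I' ψ := by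
        rintro ψ (rfl | hψ)
        · show I' b₁ ≤ I' b₂
          rw [hI', Function.update_of_ne (Ne.symm hne), Function.update_self]
          exact hm
        · exact hΦ' ψ hψ
      have := ih V I' hins
      rw [GSat, List.map_cons, hI', Function.update_self,
        Function.update_of_ne (Ne.symm hne), map_update_of_not_mem m hnρ] at this
      exact this
  | GE _ _ ih1 ih2 =>
      intro V I hΦ
      exact ih1 V I hΦ (I _) (ih2 V I hΦ)
  | @XI Φ b₁ b₂ ρ A _ hne hnρ hfr ih =>
      intro V I hΦ
      set I' := Function.update I b₂ (I b₁ + 1) with hI'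
      have hΦ' : ∀ ψ ∈ Φ, GSat V I' ψ :=
        fun ψ hψ => (gsat_update _ (hfr ψ hψ)).mpr (hΦ ψ hψ)
      have hins : ∀ ψ ∈ insert (GenForm.lt b₁ b₂) Φ, GSat V I' ψ := by
        rintro ψ (rfl | hψ)
        · show I' b₂ = I' b₁ + 1
          rw [hI', Function.update_of_ne (Ne.symm hne), Function.update_self]
        · exact hΦ' ψ hψ
      have := ih V I' hins
      rw [GSat, List.map_cons, hI', Function.update_self,
        Function.update_of_ne (Ne.symm hne), map_update_of_not_mem _ hnρ] at this
      exact this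
  | XE _ _ ih1 ih2 =>
      intro V I hΦ
      have h1 := ih1 V I hΦ
      have h2 : I _ = I _ + 1 := ih2 V I hΦ
      show NablaSat V _ (I _) _
      rw [GSat] at h1
      rw [h2]
      exact h1
  | @nablaI Φ b₁ b₂ b₃ ρ A _ hne1 hne3 hnρ hfr ih =>
      intro V I hΦ m hm1 hm3
      set I' := Function.update I b₂ m with hI'
      have hΦ' : ∀ ψ ∈ Φ, GSat V I' ψ :=
        fun ψ hψ => (gsat_update _ (hfr ψ hψ)).mpr (hΦ ψ hψ)
      have hins : ∀ ψ ∈ insert (GenForm.le b₁ b₂) (insert (GenForm.le b₂ b₃) Φ),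
          GSat V I' ψ := by
        rintro ψ (rfl | rfl | hψ)
        · show I' b₁ ≤ I' b₂
          rw [hI', Function.update_of_ne (Ne.symm hne1), Function.update_self]
          exact hm1
        · show I' b₂ ≤ I' b₃
          rw [hI', Function.update_of_ne (Ne.symm hne3), Function.update_self]
          exact hm3
        · exact hΦ' ψ hψ
      have := ih V I' hins
      rw [GSat, List.map_cons, hI', Function.update_self,
        Function.update_of_ne (Ne.symm hne1), map_update_of_not_mem _ hnρ] at this
      exact this
  | nablaE _ _ _ ih1 ih2 ih3 =>
      intro V I hΦ
      exact ih1 V I hΦ (I _) (ih2 V I hΦ) (ih3 V I hΦ)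
  | last _ hloc ih =>
      intro V I hΦ
      exact (local_hist _).1 hloc V _ _ _ (ih V I hΦ)
  | @serLt Φ b₁ b₂ b ρ A _ hne1 hneb hnρ hfr ih =>
      intro V I hΦ
      set I' := Function.update I b₂ (I b₁ + 1) with hI'
      have hΦ' : ∀ ψ ∈ Φ, GSat V I' ψ :=
        fun ψ hψ => (gsat_update _ (hfr ψ hψ)).mpr (hΦ ψ hψ)
      have hins : ∀ ψ ∈ insert (GenForm.lt b₁ b₂) Φ, GSat V I' ψ := by
        rintro ψ (rfl | hψ)
        · show I' b₂ = I' b₁ + 1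
          rw [hI', Function.update_of_ne (Ne.symm hne1), Function.update_self]
        · exact hΦ' ψ hψ
      have := ih V I' hins
      rw [GSat, hI', Function.update_of_ne (Ne.symm hneb),
        map_update_of_not_mem _ hnρ] at this
      exact this
  | @linLt Φ b₁ b₂ b₃ ψ₀ b ρ A _ _ _ _ ih1 ih2 ih3 ih4 =>
      intro V I hΦ
      have h2 : I b₂ = I b₁ + 1 := ih1 V I hΦ
      have h3 : I b₃ = I b₁ + 1 := ih2 V I hΦ
      have hψ : GSat V I ψ₀ := ih3 V I hΦ
      refine ih4 V I ?_
      rintro χ (rfl | hχ)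
      · rw [gsat_subst]
        have : I b₃ = I b₂ := by rw [h2, h3]
        rw [this, Function.update_eq_self]
        exact hψ
      · exact hΦ χ hχ
  | reflLe _ ih =>
      intro V I hΦ
      refine ih V I ?_
      rintro ψ (rfl | hψ)
      · exact le_refl _
      · exact hΦ ψ hψ
  | transLe _ _ _ ih1 ih2 ih3 =>
      intro V I hΦ
      refine ih3 V I ?_
      rintro ψ (rfl | hψ)
      · exact le_trans (ih1 V I hΦ) (ih2 V I hΦ)
      · exact hΦ ψ hψ
  | @eqLe Φ b₁ b₂ ρ A _ _ _ ih1 ih2 ih3 =>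
      intro V I hΦ
      have heq : I b₁ = I b₂ := le_antisymm (ih1 V I hΦ) (ih2 V I hΦ)
      have := ih3 V I hΦ
      rw [GSat] at this ⊢
      rw [← heq]
      exact this
  | @splitLe Φ b₁ b₂ b' ψ₀ b ρ A _ _ _ _ hne1 hne2 hneb hnρ hfr ih1 ih2 ih3 ih4 =>
      intro V I hΦ
      have h12 : I b₁ ≤ I b₂ := ih1 V I hΦ
      have hψ : GSat V I ψ₀ := ih2 V I hΦ
      rcases eq_or_lt_of_le h12 with heq | hlt
      · refine ih3 V I ?_
        rintro χ (rfl | hχ)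
        · rw [gsat_subst, ← heq, Function.update_eq_self]
          exact hψ
        · exact hΦ χ hχ
      · set I' := Function.update I b' (I b₁ + 1) with hI'
        have hΦ' : ∀ χ ∈ Φ, GSat V I' χ :=
          fun χ hχ => (gsat_update _ (hfr χ hχ)).mpr (hΦ χ hχ)
        have hins : ∀ χ ∈ insert (GenForm.lt b₁ b') (insert (GenForm.le b' b₂) Φ),
            GSat V I' χ := by
          rintro χ (rfl | rfl | hχ)
          · show I' b' = I' b₁ + 1
            rw [hI', Function.update_of_ne (Ne.symm hne1), Function.update_self]
          · show I' b' ≤ I' b₂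
            rw [hI', Function.update_of_ne (Ne.symm hne2), Function.update_self]
            exact hlt
          · exact hΦ' χ hχ
        have := ih4 V I' hins
        rw [GSat, hI', Function.update_of_ne (Ne.symm hneb),
          map_update_of_not_mem _ hnρ] at this
        exact this
  | baseLe _ _ ih1 ih2 =>
      intro V I hΦ
      refine ih2 V I ?_
      rintro ψ (rfl | hψ)
      · show I _ ≤ I _
        have h := ih1 V I hΦ
        rw [GSat] at h
        omega
      · exact hΦ ψ hψ
  | @ind Φ b₀ b bi bj ρ A _ _ _ hij hib hib0 hiρ hifr hjb hjb0 hjρ hjfr ih1 ih2 ih3 =>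
      intro V I hΦ
      have hbase : NablaSat V A (I b₀) (ρ.map I) := ih1 V I hΦ
      have hle : I b₀ ≤ I b := ih2 V I hΦ
      have hstep : ∀ n : ℕ, I b₀ ≤ n → NablaSat V A n (ρ.map I) →
          NablaSat V A (n + 1) (ρ.map I) := by
        intro n hn hA
        set I' := Function.update (Function.update I bi n) bj (n + 1) with hI'
        have hvi : I' bi = n := by
          rw [hI', Function.update_of_ne hij, Function.update_self]
        have hvj : I' bj = n + 1 := by rw [hI', Function.update_self]
        have hother : ∀ x, x ≠ bi → x ≠ bj → I' x = I x := by
          intro x h1 h2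
          rw [hI', Function.update_of_ne h2, Function.update_of_ne h1]
        have hmap : ρ.map I' = ρ.map I := by
          refine List.map_congr_left fun a ha => hother a ?_ ?_
          · rintro rfl; exact hiρ ha
          · rintro rfl; exact hjρ ha
        have hΦ' : ∀ χ ∈ Φ, GSat V I' χ := by
          intro χ hχ
          rw [hI']
          rw [gsat_update _ (hjfr χ hχ), gsat_update _ (hifr χ hχ)]
          exact hΦ χ hχ
        have hins : ∀ χ ∈ insert (GenForm.le b₀ bi)
            (insert (GenForm.lt bi bj) (insert (GenForm.lab bi ρ A) Φ)), GSat V I' χ := by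
          rintro χ (rfl | rfl | rfl | hχ)
          · show I' b₀ ≤ I' bi
            rw [hvi, hother b₀ (Ne.symm hib0) (Ne.symm hjb0)]
            exact hn
          · show I' bj = I' bi + 1
            rw [hvi, hvj]
          · show NablaSat V A (I' bi) (ρ.map I')
            rw [hvi, hmap]
            exact hA
          · exact hΦ' χ hχ
        have := ih3 V I' hins
        rw [GSat, hvj, hmap] at this
        exact this
      show NablaSat V A (I b) (ρ.map I)
      have key : ∀ d : ℕ, NablaSat V A (I b₀ + d) (ρ.map I) := by
        intro d
        induction d with
        | zero => exact hbase
        | succ d ihd => exact hstep (I b₀ + d) (Nat.le_add_right _ _) ihd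
      have : I b = I b₀ + (I b - I b₀) := by omega
      rw [this]
      exact key _

/-- Soundness of N(LTL∇) w.r.t. the semantics of LTL∇.
If `Φ ⊢∇ α:A` then `Φ ⊨∇ α:A`: for every LTL-model (valuation `V`) and every
interpretation `I` of labels into ℕ, if `M, I` satisfies every formula of `Φ`,
then it satisfies `α:A`. The label sequence `α` is represented by its last label
`b` and reversed prefix `ρ`. -/
theorem nabla_soundness {P : Type} (Φ : Set (GenForm P)) (b : ℕ) (ρ : List ℕ)
    (A : NablaFormula P) (h : Deriv Φ (.lab b ρ A)) :
    ∀ (V : ℕ → P → Prop) (I : ℕ → ℕ),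
      (∀ ψ ∈ Φ, GSat V I ψ) → GSat V I (.lab b ρ A) := by
  exact sound_gen h
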